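/- arXiv:2102.09511 — 3 statements merged into one kernel-verified Lean document; each statement's English description precedes it below -/
import Mathlib

section
/- If a sequence (a_n) of rationals satisfies a_0 = a_1 = 1 and the functional equation (∑ a_n z^n)^2 = ∑ binomial(2n,n) a_n z^n as formal power series, then a_n = 1/(n!)^2 for all n. -/
/-!
Comparing coefficients of `z ^ n` in `f ^ 2 = ∑ C(2n, n) a_n z ^ n` gives, for `n ≥ 2`,
`(C(2n, n) - 2) a_n = ∑_{0 < k < n} a_k a_{n - k}`. As `C(2n, n) ≥ 6 > 2`, this recursion determines
every `a_n` from `a_0 = 1` and `a_1`. The sequence `1 / (n!) ^ 2` is a solution because, after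
multiplying by `(n!) ^ 2`, the coefficient identity is `∑_k C(n, k) ^ 2 = C(2n, n)`.
-/

open Finset Nat PowerSeries

theorem coeff_add_two_mk_sq {R : Type*} [CommSemiring R] {a : ℕ → R} (ha₀ : a 0 = 1) (n : ℕ) :
    coeff (n + 2) (mk a ^ 2) = 2 * a (n + 2) + ∑ p ∈ antidiagonal n, a (p.1 + 1) * a (p.2 + 1) := by
  rw [sq, coeff_mul, Nat.sum_antidiagonal_succ, Nat.sum_antidiagonal_succ']
  simp only [coeff_mk, ha₀]
  ring

theorem eq_of_mk_sq_eq_mk_centralBinom_mul {R : Type*} [CommRing R] [IsDomain R] [CharZero R]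
    {a b : ℕ → R}
    (ha : mk a ^ 2 = mk fun n => (centralBinom n : R) * a n)
    (hb : mk b ^ 2 = mk fun n => (centralBinom n : R) * b n)
    (ha₀ : a 0 = 1) (hb₀ : b 0 = 1) (h₁ : a 1 = b 1) : a = b := by
  funext n
  induction n using Nat.strong_induction_on with
  | _ n ih =>
    match n, ih with
    | 0, _ => rw [ha₀, hb₀]
    | 1, _ => exact h₁
    | n + 2, ih =>
      have hsum : ∑ p ∈ antidiagonal n, a (p.1 + 1) * a (p.2 + 1)
          = ∑ p ∈ antidiagonal n, b (p.1 + 1) * b (p.2 + 1) := by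
        refine sum_congr rfl fun p hp => ?_
        rw [HasAntidiagonal.mem_antidiagonal] at hp
        rw [ih (p.1 + 1) (by omega), ih (p.2 + 1) (by omega)]
      have hrec_a := congrArg (coeff (n + 2)) ha
      have hrec_b := congrArg (coeff (n + 2)) hb
      rw [coeff_add_two_mk_sq ha₀, coeff_mk] at hrec_a
      rw [coeff_add_two_mk_sq hb₀, coeff_mk] at hrec_b
      have hC : (centralBinom (n + 2) : R) - 2 ≠ 0 := by
        have : 2 < centralBinom (n + 2) :=
          (two_le_centralBinom 1 one_pos).trans_lt (centralBinom_strictMono (by omega))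
        rw [sub_ne_zero]
        exact_mod_cast this.ne'
      refine mul_left_cancel₀ hC ?_
      linear_combination hrec_b - hrec_a + hsum

theorem mk_one_div_factorial_sq_sq {K : Type*} [Field K] [CharZero K] :
    (mk fun n => 1 / (n ! : K) ^ 2) ^ 2 = mk fun n => (centralBinom n : K) * (1 / (n ! : K) ^ 2) := by
  ext n
  rw [sq, coeff_mul, coeff_mk, centralBinom_eq_two_mul_choose, two_mul, add_choose_eq,
    cast_sum, sum_mul]
  refine sum_congr rfl ?_
  rintro ⟨i, j⟩ hij
  rw [HasAntidiagonal.mem_antidiagonal] at hij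
  subst hij
  have : ((i + j)! : K) ≠ 0 := cast_ne_zero.2 (factorial_ne_zero _)
  rw [coeff_mk, coeff_mk, cast_mul, cast_add_choose, cast_choose K (le_add_left j i),
    Nat.add_sub_cancel]
  field_simp

theorem clausen_functional_equation_determines_bessel (a : ℕ → ℚ)
    (h0 : a 0 = 1) (h1 : a 1 = 1)
    (heq : (PowerSeries.mk a) ^ 2 =
      PowerSeries.mk (fun n : ℕ => (((2 * n).choose n : ℚ)) * a n)) :
    ∀ n : ℕ, a n = 1 / ((n.factorial : ℚ) ^ 2) :=
  congrFun <|
    eq_of_mk_sq_eq_mk_centralBinom_mul heq mk_one_div_factorial_sq_sq h0 (by simp) (by simp [h1])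
end

section
/- Let b_n(λ) be defined by b_0 = 1, b_{n+1}(λ) = (1/(B(n+1)^2))((λ - A n(n+1)) b_n(λ) - n^2 b_{n-1}(λ)), with B ≠ 0. Then φ_λ(t) = ∑ b_n(λ) t^n satisfies the D2 equation (f(t) φ'' + f'(t) φ' + t φ) = λ φ as formal power series in t, where f(t) = t^3 + A t^2 + B t. -/
/-!
Writing `f = X (X² + A X + B)`, the operator regroups by powers of `X` against powers of the Euler
operator `X d/dX`, which acts diagonally on coefficients. This shows that the `n`-th coefficient of
`L φ` is `B (n+1)² b_{n+1} + A n (n+1) b_n + n² b_{n-1}`, so the recurrence is exactly the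
coefficientwise form of `L φ = λ φ`.
-/

open PowerSeries

namespace PowerSeries

variable {R : Type*}

theorem coeff_X_pow_mul_iterate_derivative [CommSemiring R] (p : R⟦X⟧) (k n : ℕ) :
    coeff n (X ^ k * (d⁄dX R)^[k] p) = n.descFactorial k * coeff n p := by
  rw [coeff_X_pow_mul']
  split_ifs with hkn
  · obtain ⟨m, rfl⟩ := Nat.exists_eq_add_of_le' hkn
    rw [Nat.add_sub_cancel, coeff_iterate_derivative, Nat.add_descFactorial_eq_ascFactorial]
  · rw [Nat.descFactorial_of_lt (not_le.mp hkn), Nat.cast_zero, zero_mul]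

theorem coeff_X_mul_derivative [CommSemiring R] (p : R⟦X⟧) (n : ℕ) :
    coeff n (X * d⁄dX R p) = n * coeff n p := by
  simpa using coeff_X_pow_mul_iterate_derivative p 1 n

theorem coeff_X_sq_mul_derivative_derivative [CommRing R] (p : R⟦X⟧) (n : ℕ) :
    coeff n (X ^ 2 * d⁄dX R (d⁄dX R p)) = n * (n - 1) * coeff n p := by
  rw [← Nat.cast_descFactorial_two]
  exact coeff_X_pow_mul_iterate_derivative p 2 n

end PowerSeries

variable {R : Type*} [CommRing R]

noncomputable def d2Operator (A B : R) (φ : R⟦X⟧) : R⟦X⟧ :=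
  (X ^ 3 + C A * X ^ 2 + C B * X) * d⁄dX R (d⁄dX R φ) +
    (3 * X ^ 2 + C (2 * A) * X + C B) * d⁄dX R φ + X * φ

theorem d2Operator_eq (A B : R) (φ : R⟦X⟧) :
    d2Operator A B φ =
      X * (X ^ 2 * d⁄dX R (d⁄dX R φ) + C 3 * (X * d⁄dX R φ) + φ) +
        C A * (X ^ 2 * d⁄dX R (d⁄dX R φ) + C 2 * (X * d⁄dX R φ)) +
          C B * (X * d⁄dX R (d⁄dX R φ) + d⁄dX R φ) := by
  simp only [d2Operator, map_mul, map_ofNat]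
  ring

theorem coeff_d2Operator (A B : R) (φ : R⟦X⟧) (n : ℕ) :
    coeff n (d2Operator A B φ) =
      B * (n + 1) ^ 2 * coeff (n + 1) φ + A * n * (n + 1) * coeff n φ +
        n ^ 2 * coeff (n - 1) φ := by
  have coeff_shifted (m : ℕ) :
      coeff m (X ^ 2 * d⁄dX R (d⁄dX R φ) + C 3 * (X * d⁄dX R φ) + φ) =
        (m + 1) ^ 2 * coeff m φ := by
    rw [map_add, map_add, coeff_C_mul, coeff_X_sq_mul_derivative_derivative,
      coeff_X_mul_derivative]
    ring
  simp only [d2Operator_eq, map_add, coeff_C_mul, coeff_X_sq_mul_derivative_derivative,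
    coeff_X_mul_derivative, coeff_derivative]
  cases n with
  | zero => rw [coeff_zero_X_mul]; push_cast; ring
  | succ m => rw [coeff_succ_X_mul, coeff_shifted]; push_cast; ring

theorem d2_equation_for_phi_general (A B lam : ℂ) (hB : B ≠ 0) (c : ℕ → ℂ)
    (hrec : ∀ n : ℕ, c (n + 1) =
      (B * ((n : ℂ) + 1) ^ 2)⁻¹ *
        ((lam - A * (n : ℂ) * ((n : ℂ) + 1)) * c n - (n : ℂ) ^ 2 * c (n - 1))) :
    (X ^ 3 + C A * X ^ 2 + C B * X) *
        derivativeFun (derivativeFun (PowerSeries.mk c)) +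
      (3 * X ^ 2 + C (2 * A) * X + C B) * derivativeFun (PowerSeries.mk c) +
      X * PowerSeries.mk c = C lam * PowerSeries.mk c := by
  have hrec' (n : ℕ) : B * ((n : ℂ) + 1) ^ 2 * c (n + 1) =
      (lam - A * n * (n + 1)) * c n - n ^ 2 * c (n - 1) := by
    have hne : B * ((n : ℂ) + 1) ^ 2 ≠ 0 :=
      mul_ne_zero hB (pow_ne_zero 2 (Nat.cast_add_one_ne_zero n))
    rw [hrec n, mul_inv_cancel_left₀ hne]
  change d2Operator A B (mk c) = C lam * mk c
  ext n
  rw [coeff_d2Operator, coeff_C_mul, coeff_mk, coeff_mk, coeff_mk]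
  linear_combination hrec' n

theorem d2_equation_for_phi (A B lam : ℂ) (hB : B ≠ 0) (c : ℕ → ℂ) (hc0 : c 0 = 1)
    (hrec : ∀ n : ℕ, c (n + 1) =
      (B * ((n : ℂ) + 1) ^ 2)⁻¹ *
        ((lam - A * (n : ℂ) * ((n : ℂ) + 1)) * c n - (n : ℂ) ^ 2 * c (n - 1))) :
    (X ^ 3 + C A * X ^ 2 + C B * X) *
        derivativeFun (derivativeFun (PowerSeries.mk c)) +
      (3 * X ^ 2 + C (2 * A) * X + C B) * derivativeFun (PowerSeries.mk c) +
      X * PowerSeries.mk c = C lam * PowerSeries.mk c :=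
  d2_equation_for_phi_general A B lam hB c hrec
end

section
/- The Markov surface m₁² + m₂² + m₃² = m₁m₂m₃ has infinitely many positive integer points. -/
private def mkv : ℕ → ℤ
  | 0 => 3
  | 1 => 6
  | (n+2) => 3 * mkv (n+1) - mkv n

private lemma mkv_bounds : ∀ n, 3 ≤ mkv n ∧ mkv n < mkv (n+1) := by
  intro n
  induction n with
  | zero => simp [mkv]
  | succ k ih =>
    obtain ⟨h1, h2⟩ := ih
    refine ⟨by linarith, ?_⟩
    show mkv (k+1) < 3 * mkv (k+1) - mkv k
    linarith

private lemma mkv_strictMono : StrictMono mkv :=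
  strictMono_nat_of_lt_succ fun n => (mkv_bounds n).2

private lemma mkv_eq : ∀ n, mkv n ^ 2 + mkv (n+1) ^ 2 + 9 = 3 * mkv n * mkv (n+1) := by
  intro n
  induction n with
  | zero => simp [mkv]
  | succ k ih =>
    have : mkv (k+2) = 3 * mkv (k+1) - mkv k := rfl
    rw [this]; ring_nf; ring_nf at ih; linarith

theorem markov_infinitely_many_solutions :
    {p : ℤ × ℤ × ℤ | 0 < p.1 ∧ 0 < p.2.1 ∧ 0 < p.2.2 ∧
      p.1 ^ 2 + p.2.1 ^ 2 + p.2.2 ^ 2 = p.1 * p.2.1 * p.2.2}.Infinite := by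
  apply Set.infinite_of_injective_forall_mem
    (f := fun n : ℕ => ((3 : ℤ), mkv n, mkv (n+1)))

  · intro m n h
    simp only [Prod.mk.injEq] at h
    exact mkv_strictMono.injective h.2.1
  · intro n
    obtain ⟨h1, h2⟩ := mkv_bounds n
    have h3 := (mkv_bounds (n+1)).1
    have heq := mkv_eq n
    refine ⟨by norm_num, by linarith, by linarith, ?_⟩
    simp only
    linarith [heq]
end
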